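/- For α, α' ∈ ℂ, the algebras A₀₂^α (with products e₁·e₂ = (1+α)e₃, e₂·e₁ = (1−α)e₃) and A₀₂^{α'} are isomorphic if and only if α'² = α². -/

import Mathlib

/-- The algebra A₀₂^α : e₁e₂ = (1+α)e₃, e₂e₁ = (1−α)e₃. -/
def mulA02 (α : ℂ) (x y : Fin 3 → ℂ) : Fin 3 → ℂ :=
  ![0, 0, (1 + α) * (x 0 * y 1) + (1 - α) * (x 1 * y 0)]

/-!
Every product lies on the line through e₃, and e₃ = (e₁e₂ + e₂e₁)/2, so an isomorphism
φ : A₀₂^α → A₀₂^α' sends e₃ to c·e₃ with c ≠ 0. Writing a = φe₁, b = φe₂, the relations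
e₁e₁ = 0, e₁e₂ = (1+α)e₃, e₂e₁ = (1−α)e₃ become polynomial equations in the coordinates of
a, b and c, from which α'²c² = α²c² follows. Conversely, the identity is an isomorphism for
α' = α and swapping e₁ and e₂ is one for α' = −α.
-/

theorem sq_eq_sq_of_mulA02_relations {K : Type*} [CommRing K] [IsDomain K] (h2 : (2 : K) ≠ 0)
    {α α' c a₀ a₁ b₀ b₁ : K} (hc : c ≠ 0) (ha : a₀ * a₁ = 0)
    (h12 : c * (1 + α) = (1 + α') * (a₀ * b₁) + (1 - α') * (a₁ * b₀))
    (h21 : c * (1 - α) = (1 + α') * (b₀ * a₁) + (1 - α') * (b₁ * a₀)) :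
    α' ^ 2 = α ^ 2 := by
  -- With p = a₀b₁, q = a₁b₀: c = p + q, αc = α'(p - q) and pq = 0,
  -- so α²c² = α'²((p + q)² - 4pq) = α'²c².
  have key : (2 * 2) * (α' ^ 2 - α ^ 2) * c ^ 2 = 0 := by
    linear_combination (-(2 * α * c) - 2 * α' * (a₀ * b₁ - a₁ * b₀)) * (h12 - h21)
      + α' ^ 2 * (2 * a₀ * b₁ + 2 * a₁ * b₀ + 2 * c) * (h12 + h21)
      + 16 * α' ^ 2 * b₀ * b₁ * ha
  have h4 : (2 * 2 : K) ≠ 0 := mul_ne_zero h2 h2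
  simpa [h4, hc, sub_eq_zero] using key

theorem mulA02_eq_smul (α : ℂ) (x y : Fin 3 → ℂ) :
    mulA02 α x y = mulA02 α x y 2 • Pi.single 2 1 := by
  funext i; fin_cases i <;> simp [mulA02]

section

variable {α α' : ℂ}

theorem mulA02_self_apply_two (x : Fin 3 → ℂ) : mulA02 α x x 2 = 2 * (x 0 * x 1) := by
  simp [mulA02]; ring

variable {φ : (Fin 3 → ℂ) →ₗ[ℂ] (Fin 3 → ℂ)}

theorem mulA02_map_apply_two (hφ : ∀ x y, φ (mulA02 α x y) = mulA02 α' (φ x) (φ y))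
    (x y : Fin 3 → ℂ) :
    φ (Pi.single 2 1) 2 * mulA02 α x y 2 = mulA02 α' (φ x) (φ y) 2 := by
  have h := congrArg (fun v ↦ φ v 2) (mulA02_eq_smul α x y)
  simp only [map_smul, Pi.smul_apply, smul_eq_mul, hφ] at h
  rw [h, mul_comm]

theorem map_single_two_eq_smul (hφ : ∀ x y, φ (mulA02 α x y) = mulA02 α' (φ x) (φ y)) :
    φ (Pi.single 2 1) = φ (Pi.single 2 1) 2 • Pi.single 2 1 := by
  have h2 : (2 : ℂ) • Pi.single 2 1 = mulA02 α (Pi.single 0 1) (Pi.single 1 1)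
      + mulA02 α (Pi.single 1 1) (Pi.single 0 1) := by
    funext i; fin_cases i <;> simp [mulA02]; ring
  have hφ2 := congrArg φ h2
  rw [map_smul, map_add, hφ, hφ] at hφ2
  funext i
  have hi := congrFun hφ2 i
  fin_cases i <;> simp [mulA02] at hi ⊢ <;> exact hi

end

theorem funCongrLeft_swap_mulA02 (α : ℂ) (x y : Fin 3 → ℂ) :
    LinearEquiv.funCongrLeft ℂ ℂ (Equiv.swap 0 1) (mulA02 α x y)
      = mulA02 (-α) (LinearEquiv.funCongrLeft ℂ ℂ (Equiv.swap 0 1) x)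
          (LinearEquiv.funCongrLeft ℂ ℂ (Equiv.swap 0 1) y) := by
  funext i; fin_cases i <;> simp [mulA02, Equiv.swap_apply_of_ne_of_ne]; ring

theorem stmt_15 (α α' : ℂ) :
    (∃ φ : (Fin 3 → ℂ) ≃ₗ[ℂ] (Fin 3 → ℂ),
      ∀ x y : Fin 3 → ℂ, φ (mulA02 α x y) = mulA02 α' (φ x) (φ y)) ↔
    α' ^ 2 = α ^ 2 := by
  constructor
  · rintro ⟨φ, hφ⟩
    have hscale := mulA02_map_apply_two (φ := φ.toLinearMap) hφ
    have hc : φ (Pi.single 2 1) 2 ≠ 0 := by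
      intro h0
      have h := map_single_two_eq_smul (φ := φ.toLinearMap) hφ
      simp only [LinearEquiv.coe_coe, h0, zero_smul, LinearEquiv.map_eq_zero_iff] at h
      simpa using congrFun h 2
    have h11 := hscale (Pi.single 0 1) (Pi.single 0 1)
    have h12 := hscale (Pi.single 0 1) (Pi.single 1 1)
    have h21 := hscale (Pi.single 1 1) (Pi.single 0 1)
    rw [mulA02_self_apply_two, mulA02_self_apply_two] at h11
    simp only [mulA02] at h12 h21
    simp at h11 h12 h21
    exact sq_eq_sq_of_mulA02_relations two_ne_zero hc (mul_eq_zero.mpr h11) h12 h21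
  · intro h
    rcases sq_eq_sq_iff_eq_or_eq_neg.mp h with rfl | rfl
    · exact ⟨LinearEquiv.refl ℂ _, fun x y ↦ rfl⟩
    · exact ⟨_, funCongrLeft_swap_mulA02 α⟩
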